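/- Let R be a commutative ring and I an ideal of R. A power series f ∈ (R,I)⟨X_1,…,X_n⟩ is a unit of the Tate algebra (R,I)⟨X_1,…,X_n⟩ if and only if its constant term f(0) is a unit of R and every coefficient of f − f(0) lies in the radical √I of I. -/

import Mathlib

open MvPowerSeries

/-- Membership in the Tate algebra `(R,I)⟨X_1,…,X_n⟩`: for every `k ≥ 1`, all but finitely
many coefficients lie in `I ^ k`. -/
def TateMem {n : ℕ} {R : Type*} [CommRing R] (I : Ideal R)
    (f : MvPowerSeries (Fin n) R) : Prop :=
  ∀ k : ℕ, 1 ≤ k → {d : Fin n →₀ ℕ | MvPowerSeries.coeff d f ∉ I ^ k}.Finite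

/-- The formal partial derivative of a multivariate power series with respect to `X j`. -/
noncomputable def psDeriv {n : ℕ} {R : Type*} [CommRing R] (j : Fin n)
    (f : MvPowerSeries (Fin n) R) : MvPowerSeries (Fin n) R :=
  fun d => (d j + 1 : ℕ) * MvPowerSeries.coeff (d + Finsupp.single j 1) f

/-- Substitution of the power series `G j` for the variables `X j` in `f`
(the intended use is when each `G j` has zero constant coefficient, in which case
the `finsum` below is a finite sum for each fixed monomial). -/
noncomputable def psSubst {n : ℕ} {R : Type*} [CommRing R]
    (G : Fin n → MvPowerSeries (Fin n) R) (f : MvPowerSeries (Fin n) R) :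
    MvPowerSeries (Fin n) R :=
  fun e => ∑ᶠ d : Fin n →₀ ℕ,
    MvPowerSeries.coeff d f * MvPowerSeries.coeff e (∏ j, G j ^ d j)

/-- `f` is a unit of the Tate algebra `(R,I)⟨X_1,…,X_n⟩`. -/
def TateUnit {n : ℕ} {R : Type*} [CommRing R] (I : Ideal R)
    (f : MvPowerSeries (Fin n) R) : Prop :=
  TateMem I f ∧ ∃ g, TateMem I g ∧ f * g = 1

/-- The Jacobian conjecture `JC(R,n)`. -/
def JC (R : Type*) [CommRing R] (n : ℕ) : Prop :=
  ∀ F : Fin n → MvPolynomial (Fin n) R,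
    IsUnit (Matrix.det (Matrix.of fun i j => MvPolynomial.pderiv j (F i))) →
    ∃ G : Fin n → MvPolynomial (Fin n) R,
      (∀ i, MvPolynomial.bind₁ G (F i) = MvPolynomial.X i) ∧
      (∀ i, MvPolynomial.bind₁ F (G i) = MvPolynomial.X i)

/-- The Tate-Jacobian conjecture `TJC(R,I,n)`. -/
def TJC (R : Type*) [CommRing R] (I : Ideal R) (n : ℕ) : Prop :=
  ∀ F : Fin n → MvPowerSeries (Fin n) R,
    (∀ i, TateMem I (F i)) →
    (∀ i, MvPowerSeries.constantCoeff (σ := Fin n) (R := R) (F i) = 0) →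
    TateUnit I (Matrix.det (Matrix.of fun i j => psDeriv j (F i))) →
    ∃ G : Fin n → MvPowerSeries (Fin n) R,
      (∀ i, TateMem I (G i)) ∧
      (∀ i, MvPowerSeries.constantCoeff (σ := Fin n) (R := R) (G i) = 0) ∧
      (∀ i, psSubst G (F i) = MvPowerSeries.X i) ∧
      (∀ i, psSubst F (G i) = MvPowerSeries.X i)

/-!
Modulo `I`, a Tate series becomes a polynomial over `R ⧸ I`, and a unit polynomial has nilpotent
non-constant coefficients; this gives the forward direction. Conversely, after scaling by the
inverse of `f(0)` we must invert `1 - h` where `h(0) = 0` and all coefficients of `h` lie in `√I`.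
Only finitely many of them lie outside `I`, so they all lie in `J = I + K` with `K ⊆ √I` finitely
generated, hence `K ^ M ⊆ I` and `J ^ (k + M k) ⊆ I ^ k`. The geometric series `∑ h ^ m` then
converges `J`-adically, hence `I`-adically, to the inverse of `1 - h`.
-/

section Reduction

variable {σ R : Type*} [CommRing R]

lemma Ideal.Quotient.isNilpotent_mk_iff {I : Ideal R} {x : R} :
    IsNilpotent (Ideal.Quotient.mk I x) ↔ x ∈ I.radical := by
  simp only [IsNilpotent, ← map_pow, Ideal.Quotient.eq_zero_iff_mem, Ideal.mem_radical_iff]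

lemma MvPowerSeries.exists_coe_eq_map_mk {I : Ideal R} {f : MvPowerSeries σ R}
    (hf : {d | coeff d f ∉ I}.Finite) :
    ∃ P : MvPolynomial σ (R ⧸ I), (P : MvPowerSeries σ (R ⧸ I)) = map (Ideal.Quotient.mk I) f :=
  ⟨.ofCoeff <| Finsupp.ofSupportFinite (fun d => Ideal.Quotient.mk I (coeff d f))
      (hf.subset fun d hd => by simpa [Ideal.Quotient.eq_zero_iff_mem] using hd),
    by ext d; simp [MvPolynomial.coeff_coe, MvPolynomial.coeff, Finsupp.ofSupportFinite_coe]⟩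

lemma MvPowerSeries.coeff_mem_radical_of_mul_eq_one {I : Ideal R} {f g : MvPowerSeries σ R}
    (hf : {d | coeff d f ∉ I}.Finite) (hg : {d | coeff d g ∉ I}.Finite) (hfg : f * g = 1)
    {d : σ →₀ ℕ} (hd : d ≠ 0) : coeff d f ∈ I.radical := by
  obtain ⟨P, hP⟩ := exists_coe_eq_map_mk hf
  obtain ⟨Q, hQ⟩ := exists_coe_eq_map_mk hg
  have hPQ : P * Q = 1 := MvPolynomial.coe_injective _ _ <| by
    rw [MvPolynomial.coe_mul, hP, hQ, ← map_mul, hfg, map_one, MvPolynomial.coe_one]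
  have hnil := (MvPolynomial.isUnit_iff.mp (IsUnit.of_mul_eq_one Q hPQ)).2 d hd
  rwa [← MvPolynomial.coeff_coe, hP, coeff_map, Ideal.Quotient.isNilpotent_mk_iff] at hnil

lemma MvPowerSeries.coeff_mul_mem_mul {I J : Ideal R} {f g : MvPowerSeries σ R}
    (hf : ∀ d, coeff d f ∈ I) (hg : ∀ d, coeff d g ∈ J) (d : σ →₀ ℕ) :
    coeff d (f * g) ∈ I * J := by
  classical
  rw [coeff_mul]
  exact Ideal.sum_mem _ fun p _ => Ideal.mul_mem_mul (hf p.1) (hg p.2)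

lemma MvPowerSeries.coeff_pow_mem_pow {I : Ideal R} {f : MvPowerSeries σ R}
    (hf : ∀ d, coeff d f ∈ I) (m : ℕ) (d : σ →₀ ℕ) : coeff d (f ^ m) ∈ I ^ m := by
  induction m generalizing d with
  | zero => simp
  | succ m ih => rw [pow_succ, pow_succ]; exact coeff_mul_mem_mul ih hf d

end Reduction

lemma Ideal.sup_pow_le_pow_of_pow_le {R : Type*} [CommRing R] {I K : Ideal R} {M : ℕ}
    (hK : K ^ M ≤ I) (k : ℕ) : (I ⊔ K) ^ (k + M * k) ≤ I ^ k :=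
  sup_pow_add_le_pow_sup_pow.trans (sup_le le_rfl (pow_mul K M k ▸ Ideal.pow_right_mono hK k))

section Tate

variable {n : ℕ} {R : Type*} [CommRing R] {I J : Ideal R}

lemma TateMem.finite_coeff_notMem {f : MvPowerSeries (Fin n) R} (hf : TateMem I f) :
    {d | coeff d f ∉ I}.Finite := by
  simpa using hf 1 le_rfl

lemma tateMem_C (r : R) : TateMem I (C (σ := Fin n) r) := fun k _ =>
  (Set.finite_singleton 0).subset fun d hd => by
    by_contra hne
    exact hd (by simp [coeff_C, Set.mem_singleton_iff.not.mp hne])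

def tateSubring (I : Ideal R) : Subring (MvPowerSeries (Fin n) R) where
  carrier := {f | TateMem I f}
  zero_mem' := by simpa using tateMem_C (I := I) (n := n) 0
  one_mem' := by simpa using tateMem_C (I := I) (n := n) 1
  add_mem' {f g} hf hg k hk := ((hf k hk).union (hg k hk)).subset fun d hd => by
    by_contra hmem
    simp only [Set.mem_union, Set.mem_ofPred_eq, not_or, not_not] at hmem
    exact hd (by simpa using add_mem hmem.1 hmem.2)
  neg_mem' {f} hf k hk := (hf k hk).subset fun d hd => by simpa using hd
  mul_mem' {f g} hf hg k hk := ((hf k hk).image2 (· + ·) (hg k hk)).subset fun d hd => by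
    by_contra hd'
    refine hd ?_
    rw [coeff_mul]
    refine Ideal.sum_mem _ fun ⟨u, v⟩ huv => ?_
    by_cases hu : coeff u f ∈ I ^ k
    · exact Ideal.mul_mem_right _ _ hu
    by_cases hv : coeff v g ∈ I ^ k
    · exact Ideal.mul_mem_left _ _ hv
    exact absurd ⟨u, hu, v, hv, Finset.HasAntidiagonal.mem_antidiagonal.mp huv⟩ hd'

lemma TateMem.of_pow_le (hIJ : ∀ k, ∃ N, J ^ N ≤ I ^ k) {f : MvPowerSeries (Fin n) R}
    (hf : TateMem J f) : TateMem I f := fun k _ => by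
  obtain ⟨N, hN⟩ := hIJ k
  exact (hf (N + 1) (by omega)).subset fun d hd hJ =>
    hd (hN (Ideal.pow_le_pow_right N.le_succ hJ))

lemma tateMem_of_one_sub_mul_eq_one {h g : MvPowerSeries (Fin n) R} (hh : TateMem J h)
    (hcoeff : ∀ d, coeff d h ∈ J) (hg : (1 - h) * g = 1) : TateMem J g := by
  intro k hk
  have hgeom : g = ∑ m ∈ Finset.range k, h ^ m + h ^ k * g := by
    linear_combination g * geom_sum_mul h k + (∑ m ∈ Finset.range k, h ^ m) * hg
  have hsum : TateMem J (∑ m ∈ Finset.range k, h ^ m) :=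
    (tateSubring J).sum_mem fun m _ => (tateSubring J).pow_mem hh m
  refine (hsum k hk).subset fun d hd hmem => hd ?_
  rw [hgeom, map_add]
  have h2 : coeff d (h ^ k * g) ∈ J ^ k * ⊤ :=
    coeff_mul_mem_mul (coeff_pow_mem_pow hcoeff k) (fun _ => Submodule.mem_top) d
  rw [Ideal.mul_top] at h2
  exact Ideal.add_mem _ hmem h2

lemma TateMem.exists_fg_coeff_mem_sup {h : MvPowerSeries (Fin n) R} (hh : TateMem I h)
    (hrad : ∀ d, coeff d h ∈ I.radical) :
    ∃ K : Ideal R, K.FG ∧ K ≤ I.radical ∧ ∀ d, coeff d h ∈ I ⊔ K := by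
  refine ⟨Ideal.span ((coeff · h) '' {d | coeff d h ∉ I}),
    Submodule.fg_span (hh.finite_coeff_notMem.image _),
    Ideal.span_le.mpr (Set.image_subset_iff.mpr fun d _ => hrad d), fun d => ?_⟩
  by_cases hd : coeff d h ∈ I
  · exact Ideal.mem_sup_left hd
  · exact Ideal.mem_sup_right (Ideal.subset_span ⟨d, hd, rfl⟩)

lemma TateMem.exists_one_sub_mul_eq_one {h : MvPowerSeries (Fin n) R} (hh : TateMem I h)
    (hrad : ∀ d, coeff d h ∈ I.radical) (h0 : constantCoeff h = 0) :
    ∃ g, TateMem I g ∧ (1 - h) * g = 1 := by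
  obtain ⟨K, hKfg, hKrad, hcoeff⟩ := hh.exists_fg_coeff_mem_sup hrad
  obtain ⟨M, hM⟩ := Ideal.exists_pow_le_of_le_radical_of_fg hKrad hKfg
  have hinv : (1 - h) * invOfUnit (1 - h) 1 = 1 := mul_invOfUnit _ _ (by simp [h0])
  have hhJ : TateMem (I ⊔ K) h := hh.of_pow_le fun k => ⟨k, Ideal.pow_right_mono le_sup_left k⟩
  exact ⟨_, (tateMem_of_one_sub_mul_eq_one hhJ hcoeff hinv).of_pow_le
    fun k => ⟨k + M * k, Ideal.sup_pow_le_pow_of_pow_le hM k⟩, hinv⟩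

end Tate

/-- A series `f` in the Tate algebra `(R,I)⟨X_1,…,X_n⟩` is a unit of the Tate algebra if and
only if `f(0)` is a unit of `R` and all coefficients of `f - f(0)` lie in `√I`. -/
theorem stmt_5 (R : Type*) [CommRing R] (I : Ideal R) (n : ℕ)
    (f : MvPowerSeries (Fin n) R) (hf : TateMem I f) :
    (∃ g, TateMem I g ∧ f * g = 1) ↔
      IsUnit (MvPowerSeries.constantCoeff (σ := Fin n) (R := R) f) ∧
      ∀ d : Fin n →₀ ℕ,
        MvPowerSeries.coeff d
          (f - MvPowerSeries.C (σ := Fin n) (R := R) (MvPowerSeries.constantCoeff (σ := Fin n) (R := R) f))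
          ∈ I.radical := by
  constructor
  · rintro ⟨g, hg, hfg⟩
    refine ⟨IsUnit.of_mul_eq_one (constantCoeff g) (by rw [← map_mul, hfg, map_one]), fun d => ?_⟩
    rcases eq_or_ne d 0 with rfl | hd
    · simp
    rw [map_sub, coeff_C, if_neg hd, sub_zero]
    exact coeff_mem_radical_of_mul_eq_one hf.finite_coeff_notMem hg.finite_coeff_notMem hfg hd
  · rintro ⟨⟨u, hu⟩, hrad⟩
    have hh_eq : 1 - C (↑u⁻¹ : R) * f = -(C (↑u⁻¹ : R) * (f - C (constantCoeff f))) := by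
      rw [← hu, mul_sub, ← map_mul, Units.inv_mul, map_one]; ring
    obtain ⟨g, hg, hhg⟩ := TateMem.exists_one_sub_mul_eq_one (h := 1 - C (↑u⁻¹ : R) * f)
      ((tateSubring I).sub_mem (tateSubring I).one_mem ((tateSubring I).mul_mem (tateMem_C _) hf))
      (fun d => by rw [hh_eq, map_neg, coeff_C_mul]; exact neg_mem (Ideal.mul_mem_left _ _ (hrad d)))
      (by simp [← hu])
    exact ⟨C (↑u⁻¹ : R) * g, (tateSubring I).mul_mem (tateMem_C _) hg, by rw [← hhg]; ring⟩
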